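/- Suppose k ≥ 6 and let D̂ ⊆ E be a path covering, i.e., every vertex of 𝒯^k belongs to exactly two edges of D̂. Then d_{D̂} = 2 < (k-1)/2, and σ^{D̂+} and σ^{D̂-} are ground state configurations; moreover, for every finite nonempty connected set C ⊆ V, H(σ_C) - H(σ^{D̂+}) ≥ 2J(k-5)|C| > 0. -/

import Mathlib

open Classical

/-- `G` is a Cayley tree with branching number `k`: an infinite connected acyclic
simple graph in which every vertex has exactly `k + 1` neighbors. -/
structure IsCayleyTree {V : Type*} (G : SimpleGraph V) (k : ℕ) : Prop where
  infinite : Infinite V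
  connected : G.Connected
  acyclic : G.IsAcyclic
  degree : ∀ v : V, (G.neighborSet v).ncard = k + 1

/-- A spin configuration takes values in `{-1, +1}`. -/
def IsSpin {V : Type*} (σ : V → ℤ) : Prop := ∀ v, σ v = 1 ∨ σ v = -1

/-- `σ` is frustrated exactly on the edges of `D`: for every edge `{x,y}` of `G`,
`σ x * σ y = -1` if `{x,y} ∈ D` and `σ x * σ y = 1` otherwise. -/
def SatisfiesD {V : Type*} (G : SimpleGraph V) (D : Set (Sym2 V)) (σ : V → ℤ) : Prop :=
  ∀ x y : V, G.Adj x y →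
    (s(x, y) ∈ D → σ x * σ y = -1) ∧ (s(x, y) ∉ D → σ x * σ y = 1)

/-- The excess energy `H(σ) - H(σbase) = J * Σ_{{x,y} ∈ E} (σbase x * σbase y - σ x * σ y)`,
a sum with finitely many nonzero terms when `σ` and `σbase` differ at finitely many sites. -/
noncomputable def excessEnergy {V : Type*} (G : SimpleGraph V) (J : ℝ) (σ σbase : V → ℤ) : ℝ :=
  J * ∑ᶠ e ∈ G.edgeSet,
      ((Sym2.lift ⟨fun x y => σbase x * σbase y - σ x * σ y, fun _ _ => by ring⟩ e : ℤ) : ℝ)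

/-- The configuration obtained from `σ` by flipping all spins in `C`. -/
noncomputable def flipSpins {V : Type*} (σ : V → ℤ) (C : Set V) : V → ℤ :=
  fun v => if v ∈ C then -σ v else σ v

/-- The number `d_D(v)` of edges of `D` incident to the vertex `v`. -/
noncomputable def incidentCount {V : Type*} (D : Set (Sym2 V)) (v : V) : ℕ :=
  {e ∈ D | v ∈ e}.ncard

/-- A set of vertices is connected if any two of its vertices are joined by a
walk staying within the set. -/
def SetConnected {V : Type*} (G : SimpleGraph V) (S : Set V) : Prop :=
  ∀ x ∈ S, ∀ y ∈ S, ∃ p : G.Walk x y, ∀ z ∈ p.support, z ∈ S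

/-!
Flipping a finite set `C` changes the energy only across the edge boundary of `C`: an
unfrustrated boundary edge costs `2J` and a frustrated one gains `2J`. In a tree fewer than `|C|`
edges lie inside `C`, so `C` has at least `(k - 1)|C|` boundary edges, while at most `d_D |C|` of
them are frustrated. Hence the flip costs at least `2J(k - 1 - 2 d_D)|C|`, which is
`2J(k - 5)|C|` for a path covering. Every finite perturbation of `σ^{D̂±}` is such a flip.
-/

open Finset

section Spins

variable {V : Type*}

theorem IsSpin.neg {σ : V → ℤ} (hσ : IsSpin σ) : IsSpin (-σ) := fun v => by
  rcases hσ v with h | h <;> simp [h]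

theorem IsSpin.eq_flipSpins {σ τ : V → ℤ} (hτ : IsSpin τ) (hσ : IsSpin σ) :
    τ = flipSpins σ {v | τ v ≠ σ v} := by
  funext v
  by_cases h : τ v = σ v
  · simp [flipSpins, h]
  · rw [flipSpins, if_pos (show v ∈ {v | τ v ≠ σ v} from h)]
    rcases hτ v with hτv | hτv <;> rcases hσ v with hσv | hσv <;> omega

theorem SatisfiesD.neg {G : SimpleGraph V} {D : Set (Sym2 V)} {σ : V → ℤ}
    (hσ : SatisfiesD G D σ) : SatisfiesD G D (-σ) := by
  intro x y h
  simpa only [Pi.neg_apply, neg_mul_neg] using hσ x y h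

theorem SatisfiesD.card_sub_two_mul_incidentCount_le_sum {G : SimpleGraph V}
    {D : Set (Sym2 V)} {σ : V → ℤ} (hσ : SatisfiesD G D σ) {v : V}
    (hfin : {e ∈ D | v ∈ e}.Finite) {t : Finset V} (ht : ∀ w ∈ t, G.Adj v w) :
    (#t : ℤ) - 2 * incidentCount D v ≤ ∑ w ∈ t, σ v * σ w := by
  have hsum : ∑ w ∈ t, σ v * σ w = #t - 2 * #{w ∈ t | s(v, w) ∈ D} := by
    rw [natCast_card_filter, card_eq_sum_ones, Nat.cast_sum, mul_sum, ← sum_sub_distrib]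
    refine sum_congr rfl fun w hw => ?_
    by_cases h : s(v, w) ∈ D
    · simp [h, (hσ v w (ht w hw)).1 h]
    · simp [h, (hσ v w (ht w hw)).2 h]
  have hcard : #{w ∈ t | s(v, w) ∈ D} ≤ incidentCount D v := by
    rw [incidentCount, ← card_map (Sym2.mkEmbedding v), ← Set.ncard_coe_finset]
    refine Set.ncard_le_ncard (fun e he => ?_) hfin
    obtain ⟨w, hw, rfl⟩ := mem_map.1 he
    exact ⟨(mem_filter.1 hw).2, Sym2.mem_mk_left v w⟩
  omega

end Spins

section FlipEnergy

variable {V : Type*} {G : SimpleGraph V}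

theorem excessEnergy_flipSpins [G.LocallyFinite] (J : ℝ) (σ : V → ℤ) (s : Finset V) :
    excessEnergy G J (flipSpins σ s) σ =
      2 * J * ((∑ v ∈ s, ∑ w ∈ G.neighborFinset v \ s, σ v * σ w : ℤ) : ℝ) := by
  have hflip : ∀ x y, σ x * σ y - flipSpins σ s x * flipSpins σ s y =
      if (x ∈ s ↔ y ∈ s) then 0 else 2 * (σ x * σ y) := by
    intro x y
    by_cases hx : x ∈ s <;> by_cases hy : y ∈ s <;> simp [flipSpins, hx, hy] <;> ring
  set boundary := s.sigma fun v => G.neighborFinset v \ s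
  have hinj : Set.InjOn (fun p : Σ _ : V, V => s(p.1, p.2)) boundary := by
    rintro ⟨a, b⟩ hab ⟨c, d⟩ hcd h
    simp only [boundary, mem_coe, mem_sigma, mem_sdiff] at hab hcd
    rcases Sym2.eq_iff.mp h with ⟨rfl, rfl⟩ | ⟨rfl, rfl⟩
    · rfl
    · exact absurd hab.1 hcd.2.2
  rw [excessEnergy, finsum_mem_eq_sum_of_subset _ (t := boundary.image fun p => s(p.1, p.2)),
    sum_image hinj, sum_sigma]
  · push_cast [mul_sum]
    refine sum_congr rfl fun v hv => sum_congr rfl fun w hw => ?_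
    simp only [Sym2.lift_mk, hflip, hv, (mem_sdiff.1 hw).2, iff_false, not_true_eq_false,
      if_false]
    push_cast
    ring
  · rintro e ⟨he, hne⟩
    induction e using Sym2.ind with | _ x y => ?_
    have hcross : ¬(x ∈ s ↔ y ∈ s) := fun h => hne (by simp [hflip, h])
    have hadj : G.Adj x y := he
    by_cases hx : x ∈ s
    · have hy : y ∉ s := fun hy => hcross (iff_of_true hx hy)
      exact mem_image.2 ⟨⟨x, y⟩, mem_sigma.2 ⟨hx, by simp [hadj, hy]⟩, rfl⟩
    · have hy : y ∈ s := by_contra fun hy => hcross (iff_of_false hx hy)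
      exact mem_image.2 ⟨⟨y, x⟩, mem_sigma.2 ⟨hy, by simp [hadj.symm, hx]⟩, Sym2.eq_swap⟩
  · intro e he
    obtain ⟨⟨v, w⟩, hp, rfl⟩ := mem_image.1 he
    simp only [boundary, mem_sigma, mem_sdiff, SimpleGraph.mem_neighborFinset] at hp
    exact hp.2.1

end FlipEnergy

namespace SimpleGraph

variable {V : Type*} {G : SimpleGraph V}

noncomputable def Connected.parent (hG : G.Connected) (r v : V) : V :=
  ((hG.preconnected v r).some.toPath : G.Walk v r).snd

theorem IsTree.parent_eq_or_parent_eq (hT : G.IsTree) (r : V) {v w : V} (h : G.Adj v w) :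
    hT.connected.parent r v = w ∨ hT.connected.parent r w = v := by
  set p : G.Path v r := (hT.connected.preconnected v r).some.toPath
  set q : G.Path w r := (hT.connected.preconnected w r).some.toPath
  by_cases hv : v ∈ (q : G.Walk w r).support
  · exact Or.inr (hT.isAcyclic.eq_snd_of_adj_start q.2 h.symm hv).symm
  · have hw : w ∈ (p : G.Walk v r).support := by
      simpa using hT.isAcyclic.mem_support_of_ne_mem_support_of_adj_of_isPath
        p.2.reverse q.2.reverse h (by simpa using hv)
    exact Or.inl (hT.isAcyclic.eq_snd_of_adj_start p.2 h hw).symm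

/-- Every neighbour of `v` is its parent or one of its children, and every vertex is a child of
at most one vertex. -/
theorem IsTree.sum_card_neighborFinset_inter_le [G.LocallyFinite] (hT : G.IsTree)
    (s : Finset V) : ∑ v ∈ s, #(G.neighborFinset v ∩ s) ≤ 2 * #s := by
  obtain ⟨r⟩ := hT.connected.nonempty
  set par := hT.connected.parent r
  have hchildren : ∀ v ∈ s, #(G.neighborFinset v ∩ s) ≤ #{w ∈ s | par w = v} + 1 := by
    intro v _
    calc #(G.neighborFinset v ∩ s) ≤ #(insert (par v) {w ∈ s | par w = v}) := by
          refine card_le_card fun w hw => ?_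
          rw [mem_inter, mem_neighborFinset] at hw
          rcases hT.parent_eq_or_parent_eq r hw.1 with h | h
          · exact mem_insert.2 (Or.inl h.symm)
          · exact mem_insert_of_mem (mem_filter.2 ⟨hw.2, h⟩)
      _ ≤ #{w ∈ s | par w = v} + 1 := card_insert_le _ _
  calc ∑ v ∈ s, #(G.neighborFinset v ∩ s) ≤ ∑ v ∈ s, (#{w ∈ s | par w = v} + 1) :=
        sum_le_sum hchildren
    _ = #{w ∈ s | par w ∈ s} + #s := by
        rw [sum_add_distrib, sum_card_fiberwise_eq_card_filter s s par, sum_const, smul_eq_mul,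
          mul_one]
    _ ≤ 2 * #s := by linarith [card_filter_le s (par · ∈ s)]

theorem IsTree.le_sum_boundary_spin_products [G.LocallyFinite] (hT : G.IsTree) {k d : ℕ}
    (hreg : G.IsRegularOfDegree (k + 1)) {D : Set (Sym2 V)} {σ : V → ℤ}
    (hσ : SatisfiesD G D σ) (hfin : ∀ v, {e ∈ D | v ∈ e}.Finite)
    (hD : ∀ v, incidentCount D v ≤ d) (s : Finset V) :
    ((k : ℤ) - 1 - 2 * d) * #s ≤ ∑ v ∈ s, ∑ w ∈ G.neighborFinset v \ s, σ v * σ w := by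
  have hvertex : ∀ v ∈ s, (k : ℤ) + 1 - 2 * d - #(G.neighborFinset v ∩ s) ≤
      ∑ w ∈ G.neighborFinset v \ s, σ v * σ w := by
    intro v _
    have hσv := hσ.card_sub_two_mul_incidentCount_le_sum (hfin v) (t := G.neighborFinset v \ s)
      fun w hw => (mem_neighborFinset _ _ _).1 (mem_sdiff.1 hw).1
    have hsplit := card_sdiff_add_card_inter (G.neighborFinset v) s
    rw [card_neighborFinset_eq_degree, hreg v] at hsplit
    have := hD v
    omega
  have hinside : (∑ v ∈ s, #(G.neighborFinset v ∩ s) : ℤ) ≤ 2 * #s := by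
    exact_mod_cast hT.sum_card_neighborFinset_inter_le s
  calc ((k : ℤ) - 1 - 2 * d) * #s
      ≤ ∑ v ∈ s, ((k : ℤ) + 1 - 2 * d - #(G.neighborFinset v ∩ s)) := by
        rw [sum_sub_distrib, sum_const, nsmul_eq_mul]
        linarith
    _ ≤ ∑ v ∈ s, ∑ w ∈ G.neighborFinset v \ s, σ v * σ w := sum_le_sum hvertex

theorem IsTree.excessEnergy_flipSpins_ge [G.LocallyFinite] (hT : G.IsTree) {k d : ℕ}
    (hreg : G.IsRegularOfDegree (k + 1)) {D : Set (Sym2 V)} {σ : V → ℤ}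
    (hσ : SatisfiesD G D σ) (hfin : ∀ v, {e ∈ D | v ∈ e}.Finite)
    (hD : ∀ v, incidentCount D v ≤ d) {J : ℝ} (hJ : 0 ≤ J) {C : Set V} (hC : C.Finite) :
    2 * J * ((k : ℝ) - 1 - 2 * d) * C.ncard ≤ excessEnergy G J (flipSpins σ C) σ := by
  lift C to Finset V using hC
  have hS : ((k : ℝ) - 1 - 2 * d) * #C ≤
      ((∑ v ∈ C, ∑ w ∈ G.neighborFinset v \ C, σ v * σ w : ℤ) : ℝ) := by
    exact_mod_cast hT.le_sum_boundary_spin_products hreg hσ hfin hD C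
  rw [excessEnergy_flipSpins, Set.ncard_coe_finset, mul_assoc]
  exact mul_le_mul_of_nonneg_left hS (by positivity)

theorem IsTree.excessEnergy_nonneg [G.LocallyFinite] (hT : G.IsTree) {k d : ℕ}
    (hreg : G.IsRegularOfDegree (k + 1)) (hkd : 2 * d + 1 ≤ k) {D : Set (Sym2 V)}
    {σ τ : V → ℤ} (hσ : IsSpin σ) (hσD : SatisfiesD G D σ)
    (hfin : ∀ v, {e ∈ D | v ∈ e}.Finite) (hD : ∀ v, incidentCount D v ≤ d) {J : ℝ}
    (hJ : 0 ≤ J) (hτ : IsSpin τ) (hτσ : {v | τ v ≠ σ v}.Finite) :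
    0 ≤ excessEnergy G J τ σ := by
  have hkd' : (0 : ℝ) ≤ (k : ℝ) - 1 - 2 * d := by
    have : (2 * d + 1 : ℝ) ≤ k := by exact_mod_cast hkd
    linarith
  rw [hτ.eq_flipSpins hσ]
  exact le_trans (by positivity) (hT.excessEnergy_flipSpins_ge hreg hσD hfin hD hJ hτσ)

end SimpleGraph

namespace IsCayleyTree

variable {V : Type*} {G : SimpleGraph V} {k : ℕ}

theorem isTree (hG : IsCayleyTree G k) : G.IsTree := ⟨hG.connected, hG.acyclic⟩

theorem finite_neighborSet (hG : IsCayleyTree G k) (v : V) : (G.neighborSet v).Finite :=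
  Set.finite_of_ncard_ne_zero (by rw [hG.degree v]; omega)

theorem isRegularOfDegree [G.LocallyFinite] (hG : IsCayleyTree G k) :
    G.IsRegularOfDegree (k + 1) := fun v => by
  rw [← G.card_neighborSet_eq_degree, ← Nat.card_eq_fintype_card, Nat.card_coe_set_eq,
    hG.degree v]

end IsCayleyTree

theorem path_covering_ground_states_general {V : Type*} (G : SimpleGraph V) (k : ℕ) (hk : 6 ≤ k)
    (hG : IsCayleyTree G k) (J : ℝ) (hJ : 0 < J)
    (Dhat : Set (Sym2 V))
    (hpath : ∀ v : V, incidentCount Dhat v = 2)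
    (σ : V → ℤ) (hσ : IsSpin σ) (hσD : SatisfiesD G Dhat σ) :
    (⨆ v, incidentCount Dhat v) = 2
      ∧ (2 : ℝ) < ((k : ℝ) - 1) / 2
      ∧ (∀ τ : V → ℤ, IsSpin τ → {v : V | τ v ≠ σ v}.Finite →
          0 ≤ excessEnergy G J τ σ)
      ∧ (∀ τ : V → ℤ, IsSpin τ → {v : V | τ v ≠ -σ v}.Finite →
          0 ≤ excessEnergy G J τ (fun v => -σ v))
      ∧ (∀ C : Set V, C.Finite → C.Nonempty → SetConnected G C →
          excessEnergy G J (flipSpins σ C) σ ≥ 2 * J * ((k : ℝ) - 5) * (C.ncard : ℝ)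
            ∧ 0 < excessEnergy G J (flipSpins σ C) σ) := by
  let _ : G.LocallyFinite := fun v => (hG.finite_neighborSet v).fintype
  have hk' : (6 : ℝ) ≤ k := by exact_mod_cast hk
  have hfin : ∀ v, {e ∈ Dhat | v ∈ e}.Finite := fun v =>
    Set.finite_of_ncard_ne_zero (by rw [← incidentCount, hpath v]; omega)
  have hD : ∀ v, incidentCount Dhat v ≤ 2 := fun v => (hpath v).le
  have hbound : ∀ C : Set V, C.Finite →
      2 * J * ((k : ℝ) - 5) * C.ncard ≤ excessEnergy G J (flipSpins σ C) σ := fun C hC => by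
    have := hG.isTree.excessEnergy_flipSpins_ge hG.isRegularOfDegree hσD hfin hD hJ.le hC
    norm_num at this ⊢
    linarith
  refine ⟨?_, by linarith, fun τ hτ hτσ => ?_, fun τ hτ hτσ => ?_, fun C hC hne _ => ?_⟩
  · have := hG.connected.nonempty
    simp only [hpath, ciSup_const]
  · exact hG.isTree.excessEnergy_nonneg hG.isRegularOfDegree (by omega) hσ hσD hfin hD hJ.le
      hτ hτσ
  · exact hG.isTree.excessEnergy_nonneg hG.isRegularOfDegree (by omega) hσ.neg hσD.neg hfin hD
      hJ.le hτ hτσ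
  · have hpos : (0 : ℝ) < C.ncard := by exact_mod_cast (Set.ncard_pos hC).2 hne
    refine ⟨hbound C hC, lt_of_lt_of_le ?_ (hbound C hC)⟩
    have : (0 : ℝ) < k - 5 := by linarith
    positivity

/-- For `k ≥ 6` and a path covering `D̂`, one has `d_{D̂} = 2 < (k-1)/2`,
the configurations `σ^{D̂+}` and `σ^{D̂-}` are ground state configurations, and for
every finite nonempty connected `C`, `H(σ_C) - H(σ^{D̂+}) ≥ 2J(k-5)|C| > 0`. -/
theorem path_covering_ground_states {V : Type*} (G : SimpleGraph V) (k : ℕ) (hk : 6 ≤ k)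
    (hG : IsCayleyTree G k) (root : V) (J : ℝ) (hJ : 0 < J)
    (Dhat : Set (Sym2 V)) (hDhat : Dhat ⊆ G.edgeSet)
    (hpath : ∀ v : V, incidentCount Dhat v = 2)
    (σ : V → ℤ) (hσ : IsSpin σ) (hσroot : σ root = 1) (hσD : SatisfiesD G Dhat σ) :
    (⨆ v, incidentCount Dhat v) = 2
      ∧ (2 : ℝ) < ((k : ℝ) - 1) / 2
      ∧ (∀ τ : V → ℤ, IsSpin τ → {v : V | τ v ≠ σ v}.Finite →
          0 ≤ excessEnergy G J τ σ)
      ∧ (∀ τ : V → ℤ, IsSpin τ → {v : V | τ v ≠ -σ v}.Finite →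
          0 ≤ excessEnergy G J τ (fun v => -σ v))
      ∧ (∀ C : Set V, C.Finite → C.Nonempty → SetConnected G C →
          excessEnergy G J (flipSpins σ C) σ ≥ 2 * J * ((k : ℝ) - 5) * (C.ncard : ℝ)
            ∧ 0 < excessEnergy G J (flipSpins σ C) σ) :=
  path_covering_ground_states_general G k hk hG J hJ Dhat hpath σ hσ hσD
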